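/- If m is a starter with m > 1, squarefull part s satisfying P⁺(m)² ∤ m, and a = α(m), then q = a + 2 is prime, q divides m, and in fact q² divides m. -/

import Mathlib

open Pointwise

/-- The set of all subset sums of `{φ(d) : d ∣ n}`. -/
def SubsetSums (n : ℕ) : Set ℕ :=
  {k | ∃ D : Finset ℕ, D ⊆ n.divisors ∧ k = ∑ d ∈ D, Nat.totient d}

/-- `n` is `φ`-practical if every integer in `{0, 1, ..., n}` is a subset sum of
the totients of the divisors of `n`. -/
def PhiPractical (n : ℕ) : Prop := 0 < n ∧ SubsetSums n = Set.Iic n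

/-- The largest prime factor of `n` (junk value `0` if `n ≤ 1`). -/
def Pplus (n : ℕ) : ℕ := n.primeFactors.sup id

/-- `d` is an initial divisor of `n`: `d ∣ n` and every prime factor of `d` is
smaller than every prime factor of `n / d`. -/
def InitialDivisor (d n : ℕ) : Prop :=
  d ∣ n ∧ ∀ p ∈ d.primeFactors, ∀ q ∈ (n / d).primeFactors, p < q

/-- A positive integer is squarefull if `p² ∣ s` for every prime `p ∣ s`. -/
def IsSquarefull (s : ℕ) : Prop := ∀ p : ℕ, p.Prime → p ∣ s → p ^ 2 ∣ s

/-- `s` is the squarefull part of `m`: the largest squarefull divisor of `m`. -/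
def IsSquarefullPart (s m : ℕ) : Prop :=
  s ∣ m ∧ IsSquarefull s ∧ ∀ t, t ∣ m → IsSquarefull t → t ≤ s

/-- A starter is a `φ`-practical `m` such that either `m / P⁺(m)` is not
`φ`-practical or `P⁺(m)² ∣ m`. -/
def Starter (m : ℕ) : Prop :=
  PhiPractical m ∧ (¬ PhiPractical (m / Pplus m) ∨ Pplus m ^ 2 ∣ m)

/-- `a = α(m)`: the largest proper initial divisor of `m` that is `φ`-practical. -/
def IsAlpha (a m : ℕ) : Prop :=
  InitialDivisor a m ∧ a < m ∧ PhiPractical a ∧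
    ∀ d, InitialDivisor d m → d < m → PhiPractical d → d ≤ a

/-!
Let `q` be the least prime factor of `m / a` and `q ^ e` its exact power in `m / a`. Writing
`a + 1` as a sum of totients of divisors of `m` needs a divisor sharing a prime `p ≥ q` with
`m / a`, and `p - 1 ∣ φ(d) ≤ a + 1` gives `q ≤ a + 2`. The number `a * q ^ e` is an initial
divisor of `m` exceeding `a`, so it is not `φ`-practical: by maximality of `α(m)` if it is
smaller than `m`, and otherwise because then `P⁺(m) = q ∥ m` and `m / P⁺(m) = a`. On the other
hand, adjoining a prime `q ∤ t` to a `φ`-practical `t` keeps it `φ`-practical as long as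
`q ≤ t + 1` (for every power of `q`) or `q ≤ t + 2` (for `q` itself). Hence `q = a + 2` and
`e ≥ 2`.
-/

theorem subsetSums_subset_Iic (n : ℕ) : SubsetSums n ⊆ Set.Iic n := by
  rintro k ⟨D, hD, rfl⟩
  calc ∑ d ∈ D, d.totient ≤ ∑ d ∈ n.divisors, d.totient := Finset.sum_le_sum_of_subset hD
    _ = n := Nat.sum_totient n

namespace PhiPractical

theorem mem_subsetSums {n k : ℕ} (h : PhiPractical n) : k ∈ SubsetSums n ↔ k ≤ n := by
  rw [h.2]; rfl

theorem of_Iic_subset {n : ℕ} (hn : 0 < n) (h : Set.Iic n ⊆ SubsetSums n) : PhiPractical n :=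
  ⟨hn, (subsetSums_subset_Iic n).antisymm h⟩

end PhiPractical

theorem exists_le_eq_mul_add_of_le_mul_add {k t L N : ℕ} (hL : L ≤ N + 1)
    (hk : k ≤ t * L + N) : ∃ c ≤ t, ∃ r ≤ N, k = c * L + r := by
  by_cases htk : t * L ≤ k
  · exact ⟨t, le_rfl, k - t * L, by omega, by omega⟩
  · have hL0 : 0 < L := Nat.pos_of_ne_zero (by rintro rfl; simp at htk)
    refine ⟨k / L, ?_, k % L, ?_, (Nat.div_add_mod' k L).symm⟩
    · exact ((Nat.div_lt_iff_lt_mul hL0).2 (by omega)).le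
    · have := Nat.mod_lt k hL0
      omega

theorem totient_mul_prime_pow_succ {d q : ℕ} (hq : q.Prime) (hqd : ¬ q ∣ d) (e : ℕ) :
    (d * q ^ (e + 1)).totient = d.totient * (q ^ e * (q - 1)) := by
  have hcop : d.Coprime (q ^ (e + 1)) :=
    ((hq.coprime_iff_not_dvd.2 hqd).symm).pow_right _
  rw [Nat.totient_mul hcop, Nat.totient_prime_pow_succ hq]

/-- Divisors of `t * q ^ e` and the divisors `d * q ^ (e + 1)`, `d ∣ t`, are disjoint, and
`φ(d * q ^ (e + 1)) = φ(d) * q ^ e * (q - 1)`. -/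
theorem add_mul_mem_subsetSums_mul_prime_pow_succ {t q e r c : ℕ} (hq : q.Prime)
    (hqt : ¬ q ∣ t) (hr : r ∈ SubsetSums (t * q ^ e)) (hc : c ∈ SubsetSums t) :
    r + c * (q ^ e * (q - 1)) ∈ SubsetSums (t * q ^ (e + 1)) := by
  obtain ⟨R, hR, rfl⟩ := hr
  obtain ⟨C, hC, rfl⟩ := hc
  have ht : t ≠ 0 := by rintro rfl; exact hqt (dvd_zero q)
  have hne : t * q ^ (e + 1) ≠ 0 := mul_ne_zero ht (pow_ne_zero _ hq.ne_zero)
  have hdvd_t : ∀ d ∈ C, d ∣ t := fun d hd => Nat.dvd_of_mem_divisors (hC hd)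
  have hdisj : Disjoint R (C.image (· * q ^ (e + 1))) := by
    refine Finset.disjoint_left.2 fun x hxR hxC => hqt ?_
    obtain ⟨d, -, rfl⟩ := Finset.mem_image.1 hxC
    have : q ^ e * q ∣ q ^ e * t := by
      rw [← pow_succ, mul_comm _ t]
      exact (dvd_mul_left _ d).trans (Nat.dvd_of_mem_divisors (hR hxR))
    exact (mul_dvd_mul_iff_left (pow_ne_zero _ hq.ne_zero)).1 this
  refine ⟨R ∪ C.image (· * q ^ (e + 1)), Finset.union_subset ?_ ?_, ?_⟩
  · exact hR.trans (Nat.divisors_subset_of_dvd hne (mul_dvd_mul_left t (pow_dvd_pow q e.le_succ)))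
  · intro x hx
    obtain ⟨d, hd, rfl⟩ := Finset.mem_image.1 hx
    exact Nat.mem_divisors.2 ⟨mul_dvd_mul_right (hdvd_t d hd) _, hne⟩
  · have hinj : Set.InjOn (· * q ^ (e + 1)) C := fun x _ y _ hxy =>
      Nat.eq_of_mul_eq_mul_right (pow_pos hq.pos _) hxy
    rw [Finset.sum_union hdisj, Finset.sum_image hinj, Finset.sum_mul]
    congr 1
    exact Finset.sum_congr rfl fun d hd =>
      (totient_mul_prime_pow_succ hq (fun h => hqt (h.trans (hdvd_t d hd))) e).symm

namespace PhiPractical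

variable {t q : ℕ}

theorem mul_prime_pow_succ {e : ℕ} (ht : PhiPractical t) (hq : q.Prime) (hqt : ¬ q ∣ t)
    (hte : PhiPractical (t * q ^ e)) (hL : q ^ e * (q - 1) ≤ t * q ^ e + 1) :
    PhiPractical (t * q ^ (e + 1)) := by
  refine of_Iic_subset (mul_pos ht.1 (pow_pos hq.pos _)) fun k hk => ?_
  have hsplit : t * q ^ (e + 1) = t * (q ^ e * (q - 1)) + t * q ^ e := by
    rw [← mul_add, ← mul_add_one, Nat.sub_add_cancel hq.one_le, pow_succ]
  have hk' : k ≤ t * (q ^ e * (q - 1)) + t * q ^ e := hsplit ▸ Set.mem_Iic.1 hk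
  obtain ⟨c, hc, r, hr, rfl⟩ := exists_le_eq_mul_add_of_le_mul_add hL hk'
  rw [add_comm (c * _)]
  exact add_mul_mem_subsetSums_mul_prime_pow_succ hq hqt
    (hte.mem_subsetSums.2 hr) (ht.mem_subsetSums.2 hc)

theorem mul_prime_pow (ht : PhiPractical t) (hq : q.Prime) (hqt : ¬ q ∣ t) (hle : q ≤ t + 1)
    (e : ℕ) : PhiPractical (t * q ^ e) := by
  induction e with
  | zero => simpa using ht
  | succ e ih =>
    refine ht.mul_prime_pow_succ hq hqt ih ?_
    calc q ^ e * (q - 1) ≤ q ^ e * t := Nat.mul_le_mul_left _ (by omega)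
      _ ≤ t * q ^ e + 1 := by rw [mul_comm]; exact Nat.le_succ _

theorem mul_prime (ht : PhiPractical t) (hq : q.Prime) (hqt : ¬ q ∣ t) (hle : q ≤ t + 2) :
    PhiPractical (t * q) := by
  simpa using ht.mul_prime_pow_succ (e := 0) hq hqt (by simpa using ht)
    (by simp only [pow_zero, one_mul, mul_one]; omega)

theorem minFac_div_le {m a : ℕ} (hm : PhiPractical m) (ha : a ∣ m) (hlt : a < m) :
    (m / a).minFac ≤ a + 2 := by
  obtain ⟨D, hD, hsum⟩ := (hm.mem_subsetSums (k := a + 1)).2 hlt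
  have ha0 : a ≠ 0 := by rintro rfl; exact hm.1.ne' (Nat.eq_zero_of_zero_dvd ha)
  obtain ⟨d, hdD, hda⟩ : ∃ d ∈ D, ¬ d ∣ a := by
    by_contra! hall
    have : ∑ d ∈ D, d.totient ≤ ∑ d ∈ a.divisors, d.totient :=
      Finset.sum_le_sum_of_subset fun d hd => Nat.mem_divisors.2 ⟨hall d hd, ha0⟩
    rw [Nat.sum_totient] at this
    omega
  have hdm : d ∣ a * (m / a) := by
    rw [Nat.mul_div_cancel' ha]; exact Nat.dvd_of_mem_divisors (hD hdD)
  have hg : d.gcd (m / a) ≠ 1 := fun hcop => hda (Nat.Coprime.dvd_of_dvd_mul_right hcop hdm)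
  set p := (d.gcd (m / a)).minFac
  have hp : p.Prime := Nat.minFac_prime hg
  have hpd : p ∣ d := (Nat.minFac_dvd _).trans (Nat.gcd_dvd_left _ _)
  have hpma : p ∣ m / a := (Nat.minFac_dvd _).trans (Nat.gcd_dvd_right _ _)
  have hφd : p - 1 ≤ d.totient := by
    refine Nat.le_of_dvd (Nat.totient_pos.2 (Nat.pos_of_mem_divisors (hD hdD))) ?_
    simpa [Nat.totient_prime hp] using Nat.totient_dvd_of_dvd hpd
  have hφD : d.totient ≤ a + 1 := hsum ▸ Finset.single_le_sum (fun _ _ => Nat.zero_le _) hdD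
  have := Nat.minFac_le_of_dvd hp.two_le hpma
  have := hp.two_le
  omega

end PhiPractical

theorem Pplus_mul_prime_pow {a q e : ℕ} (hq : q.Prime) (ha : a ≠ 0)
    (hlt : ∀ p ∈ a.primeFactors, p < q) (he : e ≠ 0) : Pplus (a * q ^ e) = q := by
  have hpf : (a * q ^ e).primeFactors = a.primeFactors ∪ {q} := by
    rw [Nat.primeFactors_mul ha (pow_ne_zero _ hq.ne_zero), Nat.primeFactors_pow _ he,
      hq.primeFactors]
  refine le_antisymm (Finset.sup_le fun p hp => ?_) (Finset.le_sup (f := id) (by simp [hpf]))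
  rw [hpf, Finset.mem_union, Finset.mem_singleton] at hp
  rcases hp with hp | rfl
  · exact (hlt p hp).le
  · exact le_rfl

theorem one_lt_div_of_dvd_of_lt {a m : ℕ} (h : a ∣ m) (hlt : a < m) : 1 < m / a :=
  (Nat.lt_div_iff_mul_lt' h 1).2 (by simpa)

namespace InitialDivisor

variable {a m : ℕ}

theorem lt_minFac_div (h : InitialDivisor a m) (hlt : a < m) :
    ∀ p ∈ a.primeFactors, p < (m / a).minFac := by
  have hma := one_lt_div_of_dvd_of_lt h.1 hlt
  exact fun p hp => h.2 p hp _ (Nat.mem_primeFactors.2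
    ⟨Nat.minFac_prime hma.ne', Nat.minFac_dvd _, by omega⟩)

theorem mul_ordProj_minFac (h : InitialDivisor a m) (hlt : a < m) :
    InitialDivisor (a * ordProj[(m / a).minFac] (m / a)) m := by
  set q := (m / a).minFac
  have hma := one_lt_div_of_dvd_of_lt h.1 hlt
  have hq : q.Prime := Nat.minFac_prime hma.ne'
  have ha : a ≠ 0 := by rintro rfl; simp at hma
  have hquot : m / (a * ordProj[q] (m / a)) = ordCompl[q] (m / a) :=
    (Nat.div_div_eq_div_mul _ _ _).symm
  refine ⟨Nat.mul_dvd_of_dvd_div h.1 (Nat.ordProj_dvd _ _), fun p hp r hr => ?_⟩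
  rw [hquot] at hr
  obtain ⟨hr, hrdvd, -⟩ := Nat.mem_primeFactors.1 hr
  have hrma : r ∣ m / a := hrdvd.trans (Nat.div_dvd_of_dvd (Nat.ordProj_dvd _ _))
  have hqr : q < r := lt_of_le_of_ne (Nat.minFac_le_of_dvd hr.two_le hrma)
    (by rintro rfl; exact Nat.not_dvd_ordCompl hq (by omega) hrdvd)
  obtain ⟨hp, hpdvd, -⟩ := Nat.mem_primeFactors.1 hp
  rcases (Nat.Prime.dvd_mul hp).1 hpdvd with hpa | hpq
  · exact h.2 p (Nat.mem_primeFactors.2 ⟨hp, hpa, ha⟩) r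
      (Nat.mem_primeFactors.2 ⟨hr, hrma, by omega⟩)
  · rw [(Nat.prime_dvd_prime_iff_eq hp hq).1 (hp.dvd_of_dvd_pow hpq)]
    exact hqr

end InitialDivisor

theorem IsAlpha.not_phiPractical_mul_ordProj_minFac {a m : ℕ} (ha : IsAlpha a m)
    (hm : Starter m) (hsq : ¬ Pplus m ^ 2 ∣ m) :
    ¬ PhiPractical (a * ordProj[(m / a).minFac] (m / a)) := by
  obtain ⟨hinit, hlt, haP, hmax⟩ := ha
  set q := (m / a).minFac
  set e := (m / a).factorization q
  have hma := one_lt_div_of_dvd_of_lt hinit.1 hlt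
  have hq : q.Prime := Nat.minFac_prime hma.ne'
  have he : e ≠ 0 := (hq.factorization_pos_of_dvd (by omega) (Nat.minFac_dvd _)).ne'
  have hbinit : InitialDivisor (a * q ^ e) m := hinit.mul_ordProj_minFac hlt
  intro hb
  rcases (Nat.le_of_dvd hm.1.1 hbinit.1).lt_or_eq with hbm | hbm
  · have hab : a < a * q ^ e := lt_mul_right haP.1 (Nat.one_lt_pow he hq.one_lt)
    exact (hmax _ hbinit hbm hb).not_gt hab
  · have hP : Pplus m = q := hbm ▸ Pplus_mul_prime_pow hq haP.1.ne' (hinit.lt_minFac_div hlt) he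
    have he1 : e = 1 := by
      by_contra he1
      exact hsq (hP ▸ hbm ▸ (pow_dvd_pow q (by omega)).trans (dvd_mul_left _ a))
    have hdiv : m / Pplus m = a := by
      rw [hP, ← hbm, he1, pow_one, Nat.mul_div_cancel _ hq.pos]
    exact hm.2.resolve_right hsq (hdiv ▸ haP)

theorem starter_alpha_add_two_prime_sq_dvd_general (m a : ℕ) (hm : Starter m)
    (hsq : ¬ Pplus m ^ 2 ∣ m) (ha : IsAlpha a m) :
    (a + 2).Prime ∧ (a + 2) ∣ m ∧ (a + 2) ^ 2 ∣ m := by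
  have hb := ha.not_phiPractical_mul_ordProj_minFac hm hsq
  obtain ⟨hinit, hlt, haP, -⟩ := ha
  have hma := one_lt_div_of_dvd_of_lt hinit.1 hlt
  set q := (m / a).minFac
  set e := (m / a).factorization q
  have hq : q.Prime := Nat.minFac_prime hma.ne'
  have hqa : ¬ q ∣ a := fun h =>
    (hinit.lt_minFac_div hlt q (Nat.mem_primeFactors.2 ⟨hq, h, haP.1.ne'⟩)).false
  have hq_eq : q = a + 2 := by
    have := hm.1.minFac_div_le hinit.1 hlt
    by_contra hne
    exact hb (haP.mul_prime_pow hq hqa (by omega) e)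
  have he : 2 ≤ e := by
    have := hq.factorization_pos_of_dvd (by omega) (Nat.minFac_dvd (m / a))
    by_contra! he
    have he1 : e = 1 := by omega
    exact hb (by rw [he1, pow_one]; exact haP.mul_prime hq hqa hq_eq.le)
  have hqm : q ^ e ∣ m := (Nat.ordProj_dvd _ _).trans (Nat.div_dvd_of_dvd hinit.1)
  rw [← hq_eq]
  exact ⟨hq, (dvd_pow_self q (by omega)).trans hqm, (pow_dvd_pow q he).trans hqm⟩

theorem starter_alpha_add_two_prime_sq_dvd (m a : ℕ) (hm : Starter m) (hm1 : 1 < m)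
    (hsq : ¬ Pplus m ^ 2 ∣ m) (ha : IsAlpha a m) :
    (a + 2).Prime ∧ (a + 2) ∣ m ∧ (a + 2) ^ 2 ∣ m :=
  starter_alpha_add_two_prime_sq_dvd_general m a hm hsq ha
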